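/- arXiv:2603.16081 — 2 statements merged into one kernel-verified Lean document; each statement's English description precedes it below -/
import Mathlib

section
/- Let V be a locally finite, connected weighted graph satisfying Assumption A (with data x₀, R₀, α, and pseudo-metric d), and let θ₁ ≥ 2, θ₂ ≥ 2 satisfy 2θ₁/θ₂ ≥ 1+α. Let φ ∈ C²([0,∞)) with 0 ≤ φ ≤ 1, φ ≡ 1 on [0,1], φ ≡ 0 on [2,∞), φ' ≤ 0, and for R > 0 set φ_R(x,t) = φ((t^{θ₂} + d(x,x₀)^{θ₁})/R^{θ₁}). Then there exists a constant C > 0 such that for every R ≥ R₀ and every (x,t) ∈ V×[0,∞), |∂²_t φ_R(x,t)| ≤ C·R^{−2θ₁/θ₂}·1_{E_R}(x,t), where E_R = {(x,t) ∈ V×[0,∞) : R^{θ₁} ≤ d(x,x₀)^{θ₁} + t^{θ₂} ≤ 2R^{θ₁}}. -/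
open MeasureTheory Filter

namespace GraphWave

variable {V : Type*}

/-- A weighted graph: symmetric edge weights without loops, with finite sums at
each vertex, together with a positive vertex weight. -/
structure WeightedGraph (V : Type*) where
  ω : V → V → ℝ
  μ : V → ℝ
  ω_nonneg : ∀ x y, 0 ≤ ω x y
  ω_self : ∀ x, ω x x = 0
  ω_symm : ∀ x y, ω x y = ω y x
  ω_summable : ∀ x, Summable fun y => ω x y
  μ_pos : ∀ x, 0 < μ x

/-- Adjacency: `y ∼ x` iff `ω x y > 0`. -/
def WeightedGraph.Adj (G : WeightedGraph V) (x y : V) : Prop := 0 < G.ω x y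

/-- Local finiteness: each vertex has finitely many neighbours. -/
def WeightedGraph.LocallyFinite (G : WeightedGraph V) : Prop :=
  ∀ x : V, {y : V | G.Adj x y}.Finite

/-- Connectedness: any two vertices are joined by a finite path of neighbours. -/
def WeightedGraph.Connected (G : WeightedGraph V) : Prop :=
  ∀ x y : V, ∃ n : ℕ, ∃ f : ℕ → V, f 0 = x ∧ f n = y ∧ ∀ i < n, G.Adj (f i) (f (i + 1))

/-- The graph Laplacian `Δ f (x) = (1/μ x) ∑_{y ∼ x} ω x y (f y - f x)`. -/
noncomputable def WeightedGraph.lap (G : WeightedGraph V) (f : V → ℝ) (x : V) : ℝ :=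
  (G.μ x)⁻¹ * ∑' y : V, G.ω x y * (f y - f x)

/-- A pseudo-metric on `V`. -/
structure IsPseudoMetric (d : V → V → ℝ) : Prop where
  nonneg : ∀ x y, 0 ≤ d x y
  symm : ∀ x y, d x y = d y x
  refl : ∀ x, d x x = 0
  triangle : ∀ x y z, d x y ≤ d x z + d z y

/-- The ball `B_R(x₀)` with respect to the pseudo-metric `d`. -/
def ball (d : V → V → ℝ) (x₀ : V) (R : ℝ) : Set V := {y : V | d y x₀ ≤ R}

/-- The set of values `d x y` over edges `x ∼ y`; its sup is the jump size. -/
def jumpSet (G : WeightedGraph V) (d : V → V → ℝ) : Set ℝ :=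
  {r : ℝ | ∃ x y, G.Adj x y ∧ r = d x y}

/-- Assumption A of the paper. -/
structure AssumptionA (G : WeightedGraph V) (d : V → V → ℝ) (x₀ : V) (R₀ α : ℝ) : Prop where
  deg_le : ∃ C₁ > 0, ∀ x : V, (∑' y : V, G.ω x y) ≤ C₁ * G.μ x
  pm : IsPseudoMetric d
  jump_bdd : BddAbove (jumpSet G d)
  ball_fin : ∀ (x : V) (R : ℝ), 0 < R → (ball d x R).Finite
  R₀_pos : 0 < R₀
  α_nonneg : 0 ≤ α
  α_le_one : α ≤ 1
  lap_dist : ∃ C₂ > 0, ∀ x : V, x ∉ ball d x₀ R₀ →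
      G.lap (fun y => d y x₀) x ≤ C₂ / d x x₀ ^ α

/-- The annulus `E_R ⊆ V × [0,∞)`. -/
def ER (d : V → V → ℝ) (x₀ : V) (θ₁ θ₂ R : ℝ) : Set (V × ℝ) :=
  {z : V × ℝ | 0 ≤ z.2 ∧ R ^ θ₁ ≤ d z.1 x₀ ^ θ₁ + z.2 ^ θ₂ ∧
    d z.1 x₀ ^ θ₁ + z.2 ^ θ₂ ≤ 2 * R ^ θ₁}

/-- The enlarged annulus `F_R ⊆ V × [0,∞)`. -/
def FR (d : V → V → ℝ) (x₀ : V) (θ₁ θ₂ R : ℝ) : Set (V × ℝ) :=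
  {z : V × ℝ | 0 ≤ z.2 ∧ (R / 2) ^ θ₁ ≤ d z.1 x₀ ^ θ₁ + z.2 ^ θ₂ ∧
    d z.1 x₀ ^ θ₁ + z.2 ^ θ₂ ≤ (4 * R) ^ θ₁}

/-- Sum of `f` over the ball `B_R(x₀)`. -/
noncomputable def ballSum (d : V → V → ℝ) (x₀ : V) (R : ℝ) (f : V → ℝ) : ℝ :=
  ∑' y : ball d x₀ R, f y.1

/-- Admissible test functions: non-negative, compactly supported on `V × [0,∞)`
(finitely many vertices, bounded time support), and `C²` in time. -/
structure IsTestFunction (φ : V → ℝ → ℝ) : Prop where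
  nonneg : ∀ x t, 0 ≤ φ x t
  finite_spt : {x : V | ∃ t : ℝ, φ x t ≠ 0}.Finite
  bdd_spt : ∃ T : ℝ, ∀ (x : V) (t : ℝ), T ≤ t → φ x t = 0
  smooth : ∀ x, ContDiff ℝ 2 (φ x)

/-- Weak solution of the system `u_tt - Δu ≥ h₁|v|^p`, `v_tt - Δv ≥ h₂|u|^q`
with initial data `(u₀, u₁, v₀, v₁)`. -/
structure IsWeakSolSys (G : WeightedGraph V) (h₁ h₂ : V → ℝ → ℝ) (p q : ℝ)
    (u v : V → ℝ → ℝ) (u₀ u₁ v₀ v₁ : V → ℝ) : Prop where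
  u_L1loc : ∀ (x : V) (T : ℝ), IntegrableOn (u x) (Set.Ioc 0 T)
  u_Lqloc : ∀ (x : V) (T : ℝ), IntegrableOn (fun t => h₂ x t * |u x t| ^ q) (Set.Ioc 0 T)
  v_L1loc : ∀ (x : V) (T : ℝ), IntegrableOn (v x) (Set.Ioc 0 T)
  v_Lploc : ∀ (x : V) (T : ℝ), IntegrableOn (fun t => h₁ x t * |v x t| ^ p) (Set.Ioc 0 T)
  ineq_u : ∀ φ : V → ℝ → ℝ, IsTestFunction φ →
      (∫ t in Set.Ioi (0 : ℝ), ∑' x : V, u x t * deriv (deriv (φ x)) t * G.μ x) -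
        (∫ t in Set.Ioi (0 : ℝ), ∑' x : V, G.lap (fun y => u y t) x * φ x t * G.μ x) +
        (∑' x : V, u₀ x * deriv (φ x) 0 * G.μ x) -
        (∑' x : V, u₁ x * φ x 0 * G.μ x) ≥
      ∫ t in Set.Ioi (0 : ℝ), ∑' x : V, h₁ x t * |v x t| ^ p * φ x t * G.μ x
  ineq_v : ∀ φ : V → ℝ → ℝ, IsTestFunction φ →
      (∫ t in Set.Ioi (0 : ℝ), ∑' x : V, v x t * deriv (deriv (φ x)) t * G.μ x) -
        (∫ t in Set.Ioi (0 : ℝ), ∑' x : V, G.lap (fun y => v y t) x * φ x t * G.μ x) +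
        (∑' x : V, v₀ x * deriv (φ x) 0 * G.μ x) -
        (∑' x : V, v₁ x * φ x 0 * G.μ x) ≥
      ∫ t in Set.Ioi (0 : ℝ), ∑' x : V, h₂ x t * |u x t| ^ q * φ x t * G.μ x

/-- Weak solution of the single inequality `u_tt - Δu ≥ h|u|^p`. -/
structure IsWeakSol (G : WeightedGraph V) (h : V → ℝ → ℝ) (p : ℝ)
    (u : V → ℝ → ℝ) (u₀ u₁ : V → ℝ) : Prop where
  u_L1loc : ∀ (x : V) (T : ℝ), IntegrableOn (u x) (Set.Ioc 0 T)
  u_Lploc : ∀ (x : V) (T : ℝ), IntegrableOn (fun t => h x t * |u x t| ^ p) (Set.Ioc 0 T)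
  ineq : ∀ φ : V → ℝ → ℝ, IsTestFunction φ →
      (∫ t in Set.Ioi (0 : ℝ), ∑' x : V, u x t * deriv (deriv (φ x)) t * G.μ x) -
        (∫ t in Set.Ioi (0 : ℝ), ∑' x : V, G.lap (fun y => u y t) x * φ x t * G.μ x) +
        (∑' x : V, u₀ x * deriv (φ x) 0 * G.μ x) -
        (∑' x : V, u₁ x * φ x 0 * G.μ x) ≥
      ∫ t in Set.Ioi (0 : ℝ), ∑' x : V, h x t * |u x t| ^ p * φ x t * G.μ x

/-- Membership in the weighted space `X_δ`. -/
def MemX (G : WeightedGraph V) (d : V → V → ℝ) (x₀ : V) (δ : ℝ) (f : V → ℝ) : Prop :=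
  Summable fun x : V => |f x| * Real.exp (-δ * d x x₀) * G.μ x

/-!
Write `s = (t^θ₂ + d(x,x₀)^θ₁) / R^θ₁`. By the chain rule
`∂²_t φ_R = φ''(s) (θ₂ t^(θ₂-1) / R^θ₁)² + φ'(s) θ₂ (θ₂-1) t^(θ₂-2) / R^θ₁`.
Off `E_R` we have `s ∈ [0,1] ∪ [2,∞)`, where `φ` is locally constant up to the endpoints, so
`φ'(s) = φ''(s) = 0` by continuity. On `E_R`, `t^θ₂ ≤ 2 R^θ₁` gives
`t^(θ₂-k) / R^θ₁ ≤ 2 R^(-k θ₁/θ₂)` for `k = 1, 2`, while `φ'` and `φ''` are bounded on `[0,2]`.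
-/

open Set

lemma eqOn_deriv_zero_closure_of_eqOn_const {f : ℝ → ℝ} (hf : Continuous (deriv f))
    {U : Set ℝ} (hU : IsOpen U) {c : ℝ} (h : EqOn f (fun _ => c) U) :
    EqOn (deriv f) 0 (closure U) := by
  refine EqOn.closure (fun x hx => ?_) hf continuous_const
  have hfc : f =ᶠ[nhds x] fun _ => c := Filter.eventually_of_mem (hU.mem_nhds hx) h
  simp [hfc.deriv_eq]

lemma deriv_eq_zero_and_deriv_deriv_eq_zero_of_eqOn_const {f : ℝ → ℝ} (hf : ContDiff ℝ 2 f)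
    {U : Set ℝ} (hU : IsOpen U) {c : ℝ} (h : EqOn f (fun _ => c) U) {x : ℝ}
    (hx : x ∈ closure U) : deriv f x = 0 ∧ deriv (deriv f) x = 0 := by
  have hf' : EqOn (deriv f) 0 (closure U) :=
    eqOn_deriv_zero_closure_of_eqOn_const (hf.continuous_deriv one_le_two) hU h
  exact ⟨hf' hx, eqOn_deriv_zero_closure_of_eqOn_const hf.deriv'.continuous_deriv_one hU
    (hf'.mono subset_closure) hx⟩

lemma deriv_deriv_comp {φ g g' : ℝ → ℝ} {g'' t : ℝ} (hφ : ContDiff ℝ 2 φ)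
    (hg : ∀ τ, HasDerivAt g (g' τ) τ) (hg' : HasDerivAt g' g'' t) :
    deriv (deriv fun τ => φ (g τ)) t =
      deriv (deriv φ) (g t) * g' t ^ 2 + deriv φ (g t) * g'' := by
  have hφ' : deriv (fun τ => φ (g τ)) = fun τ => deriv φ (g τ) * g' τ :=
    funext fun τ => ((hφ.differentiable two_ne_zero _).hasDerivAt.comp τ (hg τ)).deriv
  have hφ'g : HasDerivAt (fun τ => deriv φ (g τ)) (deriv (deriv φ) (g t) * g' t) t :=
    (hφ.differentiable_deriv_two _).hasDerivAt.comp t (hg t)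
  rw [hφ']
  exact (hφ'g.mul hg').deriv.trans (by ring)

lemma deriv_deriv_comp_rpow_add_div {φ : ℝ → ℝ} (hφ : ContDiff ℝ 2 φ) {θ : ℝ} (hθ : 2 ≤ θ)
    (a c t : ℝ) :
    deriv (deriv fun τ => φ ((τ ^ θ + a) / c)) t =
      deriv (deriv φ) ((t ^ θ + a) / c) * (θ * (t ^ (θ - 1) / c)) ^ 2 +
        deriv φ ((t ^ θ + a) / c) * (θ * (θ - 1) * (t ^ (θ - 2) / c)) := by
  have hrpow := Real.hasDerivAt_rpow_const (x := t) (p := θ - 1) (Or.inr (by linarith))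
  rw [show θ - 1 - 1 = θ - 2 by ring] at hrpow
  refine (deriv_deriv_comp hφ (fun τ => ?_) ((hrpow.const_mul θ).div_const c)).trans (by ring)
  exact ((Real.hasDerivAt_rpow_const (Or.inr (by linarith))).add_const a).div_const c

lemma rpow_le_two_mul_rpow_of_rpow_le {t L θ e : ℝ} (ht : 0 ≤ t) (hL : 0 ≤ L) (hθ : 0 < θ)
    (he : 0 ≤ e) (heθ : e ≤ θ) (h : t ^ θ ≤ 2 * L ^ θ) : t ^ e ≤ 2 * L ^ e := by
  have hexp : e / θ ≤ 1 := div_le_one_of_le₀ heθ hθ.le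
  calc t ^ e = (t ^ θ) ^ (e / θ) := by rw [← Real.rpow_mul ht, mul_div_cancel₀ _ hθ.ne']
    _ ≤ (2 * L ^ θ) ^ (e / θ) := by gcongr
    _ = 2 ^ (e / θ) * L ^ e := by
      rw [Real.mul_rpow zero_le_two (by positivity), ← Real.rpow_mul hL, mul_div_cancel₀ _ hθ.ne']
    _ ≤ 2 * L ^ e := by
      gcongr
      exact Real.rpow_le_self_of_one_le one_le_two hexp

lemma rpow_sub_div_rpow_le_of_rpow_le {t L θ k : ℝ} (ht : 0 ≤ t) (hL : 0 < L) (hθ : 0 < θ)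
    (hk : 0 ≤ k) (hkθ : k ≤ θ) (h : t ^ θ ≤ 2 * L ^ θ) : t ^ (θ - k) / L ^ θ ≤ 2 / L ^ k := by
  rw [div_le_div_iff₀ (by positivity) (by positivity)]
  calc t ^ (θ - k) * L ^ k ≤ 2 * L ^ (θ - k) * L ^ k := by
        gcongr
        exact rpow_le_two_mul_rpow_of_rpow_le ht hL.le hθ (by linarith) (by linarith) h
    _ = 2 * L ^ θ := by rw [mul_assoc, ← Real.rpow_add hL, sub_add_cancel]

lemma exists_abs_deriv_deriv_comp_rpow_add_div_le {φ : ℝ → ℝ} (hφ : ContDiff ℝ 2 φ) {θ : ℝ}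
    (hθ : 2 ≤ θ) :
    ∃ K, ∀ L a t : ℝ, 0 < L → 0 ≤ a → 0 ≤ t → a + t ^ θ ≤ 2 * L ^ θ →
      |deriv (deriv fun τ => φ ((τ ^ θ + a) / L ^ θ)) t| ≤ K / L ^ 2 := by
  obtain ⟨M₁, hM₁⟩ := (isCompact_Icc (a := (0 : ℝ)) (b := 2)).exists_bound_of_continuousOn
    (hφ.continuous_deriv one_le_two).continuousOn
  obtain ⟨M₂, hM₂⟩ := (isCompact_Icc (a := (0 : ℝ)) (b := 2)).exists_bound_of_continuousOn
    hφ.deriv'.continuous_deriv_one.continuousOn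
  refine ⟨M₂ * (2 * θ) ^ 2 + M₁ * (2 * (θ * (θ - 1))), fun L a t hL ha ht h => ?_⟩
  have hLθ : 0 < L ^ θ := Real.rpow_pos_of_pos hL θ
  have htθ : t ^ θ ≤ 2 * L ^ θ := by linarith
  have hs : (t ^ θ + a) / L ^ θ ∈ Icc (0 : ℝ) 2 :=
    ⟨by positivity, (div_le_iff₀ hLθ).2 (by linarith)⟩
  have h₁ : t ^ (θ - 1) / L ^ θ ≤ 2 / L := by
    simpa using rpow_sub_div_rpow_le_of_rpow_le ht hL (by linarith) zero_le_one (by linarith) htθ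
  have h₂ : t ^ (θ - 2) / L ^ θ ≤ 2 / L ^ 2 := by
    simpa using rpow_sub_div_rpow_le_of_rpow_le ht hL (by linarith) zero_le_two hθ htθ
  have hθ' : 0 ≤ θ * (θ - 1) := by nlinarith
  rw [deriv_deriv_comp_rpow_add_div hφ hθ]
  calc _ ≤ |deriv (deriv φ) ((t ^ θ + a) / L ^ θ)| * (θ * (t ^ (θ - 1) / L ^ θ)) ^ 2 +
          |deriv φ ((t ^ θ + a) / L ^ θ)| * (θ * (θ - 1) * (t ^ (θ - 2) / L ^ θ)) := by
        refine (abs_add_le _ _).trans_eq ?_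
        rw [abs_mul, abs_mul, abs_sq, abs_of_nonneg (mul_nonneg hθ' (by positivity))]
    _ ≤ M₂ * (θ * (2 / L)) ^ 2 + M₁ * (θ * (θ - 1) * (2 / L ^ 2)) := by
        gcongr
        · exact (abs_nonneg _).trans (hM₂ _ hs)
        · exact hM₂ _ hs
        · exact (abs_nonneg _).trans (hM₁ _ hs)
        · exact hM₁ _ hs
    _ = (M₂ * (2 * θ) ^ 2 + M₁ * (2 * (θ * (θ - 1)))) / L ^ 2 := by ring

lemma deriv_eq_zero_and_deriv_deriv_eq_zero_of_cutoff {φ : ℝ → ℝ} (hφ : ContDiff ℝ 2 φ)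
    (hφ1 : ∀ r ∈ Icc (0 : ℝ) 1, φ r = 1) (hφ0 : ∀ r, 2 ≤ r → φ r = 0) {s : ℝ}
    (hs : s ∈ Icc 0 1 ∪ Ici 2) : deriv φ s = 0 ∧ deriv (deriv φ) s = 0 := by
  rcases hs with hs | hs
  · refine deriv_eq_zero_and_deriv_deriv_eq_zero_of_eqOn_const hφ isOpen_Ioo
      (fun r hr => hφ1 r (Ioo_subset_Icc_self hr)) ?_
    rwa [closure_Ioo zero_ne_one]
  · refine deriv_eq_zero_and_deriv_deriv_eq_zero_of_eqOn_const hφ isOpen_Ioi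
      (fun r hr => hφ0 r (le_of_lt hr)) ?_
    rwa [closure_Ioi]

lemma div_mem_Icc_union_Ici_of_notMem_Icc {x c : ℝ} (hx : 0 ≤ x) (hc : 0 < c)
    (h : ¬(c ≤ x ∧ x ≤ 2 * c)) : x / c ∈ Icc 0 1 ∪ Ici 2 := by
  rw [not_and_or, not_le, not_le] at h
  rcases h with h | h
  · exact Or.inl ⟨div_nonneg hx hc.le, (div_le_one hc).2 h.le⟩
  · exact Or.inr ((le_div_iff₀ hc).2 h.le)

theorem dtt_cutoff_bound_general {V : Type*}
    (G : WeightedGraph V) (d : V → V → ℝ) (x₀ : V) (R₀ α : ℝ)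
    (hA : AssumptionA G d x₀ R₀ α)
    (θ₁ θ₂ : ℝ) (hθ₂ : 2 ≤ θ₂)
    (φ : ℝ → ℝ) (hφsm : ContDiff ℝ 2 φ)
    (hφ1 : ∀ r ∈ Set.Icc (0 : ℝ) 1, φ r = 1)
    (hφ0 : ∀ r, 2 ≤ r → φ r = 0) :
    ∃ C > 0, ∀ R ≥ R₀, ∀ (x : V) (t : ℝ), 0 ≤ t →
      |deriv (deriv (fun τ => φ ((τ ^ θ₂ + d x x₀ ^ θ₁) / R ^ θ₁))) t| ≤
        C / R ^ (2 * θ₁ / θ₂) * Set.indicator (ER d x₀ θ₁ θ₂ R) (fun _ => (1 : ℝ)) (x, t) := by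
  obtain ⟨K, hK⟩ := exists_abs_deriv_deriv_comp_rpow_add_div_le hφsm hθ₂
  refine ⟨max K 1, by positivity, fun R hR x t ht => ?_⟩
  have hR : 0 < R := hA.R₀_pos.trans_le hR
  have hd : 0 ≤ d x x₀ ^ θ₁ := Real.rpow_nonneg (hA.pm.nonneg x x₀) θ₁
  by_cases hmem : (x, t) ∈ ER d x₀ θ₁ θ₂ R
  · set L := R ^ (θ₁ / θ₂)
    have hLθ : R ^ θ₁ = L ^ θ₂ := by
      rw [← Real.rpow_mul hR.le, div_mul_cancel₀ _ (by linarith)]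
    have hL2 : R ^ (2 * θ₁ / θ₂) = L ^ 2 := by
      rw [← Real.rpow_natCast, ← Real.rpow_mul hR.le]
      ring_nf
    rw [Set.indicator_of_mem hmem, mul_one, hLθ, hL2]
    refine (hK L _ t (by positivity) hd ht (hLθ ▸ hmem.2.2)).trans ?_
    gcongr
    exact le_max_left _ _
  · rw [Set.indicator_of_notMem hmem, mul_zero, abs_nonpos_iff,
      deriv_deriv_comp_rpow_add_div hφsm hθ₂]
    have hs := div_mem_Icc_union_Ici_of_notMem_Icc (by positivity)
      (Real.rpow_pos_of_pos hR θ₁) fun h => hmem ⟨ht, h⟩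
    rw [add_comm] at hs
    obtain ⟨hφ', hφ''⟩ := deriv_eq_zero_and_deriv_deriv_eq_zero_of_cutoff hφsm hφ1 hφ0 hs
    rw [hφ', hφ'']
    ring

/-- Lemma (cut-off estimate): `|∂²_t φ_R| ≤ C R^{-2θ₁/θ₂} 1_{E_R}`. -/
theorem dtt_cutoff_bound {V : Type*} [Countable V] [Infinite V]
    (G : WeightedGraph V) (d : V → V → ℝ) (x₀ : V) (R₀ α : ℝ)
    (hLF : G.LocallyFinite) (hConn : G.Connected)
    (hA : AssumptionA G d x₀ R₀ α)
    (θ₁ θ₂ : ℝ) (hθ₁ : 2 ≤ θ₁) (hθ₂ : 2 ≤ θ₂) (hθ : 1 + α ≤ 2 * θ₁ / θ₂)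
    (φ : ℝ → ℝ) (hφsm : ContDiff ℝ 2 φ)
    (hφ01 : ∀ r, 0 ≤ φ r ∧ φ r ≤ 1)
    (hφ1 : ∀ r ∈ Set.Icc (0 : ℝ) 1, φ r = 1)
    (hφ0 : ∀ r, 2 ≤ r → φ r = 0)
    (hφ' : ∀ r, 0 ≤ r → deriv φ r ≤ 0) :
    ∃ C > 0, ∀ R ≥ R₀, ∀ (x : V) (t : ℝ), 0 ≤ t →
      |deriv (deriv (fun τ => φ ((τ ^ θ₂ + d x x₀ ^ θ₁) / R ^ θ₁))) t| ≤
        C / R ^ (2 * θ₁ / θ₂) * Set.indicator (ER d x₀ θ₁ θ₂ R) (fun _ => (1 : ℝ)) (x, t) :=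
  dtt_cutoff_bound_general G d x₀ R₀ α hA θ₁ θ₂ hθ₂ φ hφsm hφ1 hφ0

end GraphWave
end

section
/- Let V be a locally finite, connected weighted graph satisfying Assumption A (with data x₀, R₀, α, and pseudo-metric d with jump size j), let δ > 0 and s ≥ 2. Let ψ ∈ C²([−j,∞)) be positive with ψ' ≤ 0, ψ ≡ 1 on [−j,1] and ψ(r) = e^{−δr} for r ≥ 2, let η ∈ C²([0,∞)) be non-negative and compactly supported with η' ≤ 0, η ≡ 1 on [0,1], η ≡ 0 on [2,∞), and for R > 0 set φ_R(x,t) = η(t/R^{(1+α)/2})^s · ψ((d(x,x₀)−j)/R). Let Q_R = V × [R^{(1+α)/2}, 2R^{(1+α)/2}]. Then there exists a constant C > 0 such that for every R ≥ R₀ and every (x,t) ∈ V×[0,∞), |∂²_t φ_R(x,t)| ≤ C·R^{−(1+α)}·η(t/R^{(1+α)/2})^{s−2}·e^{−δ d(x,x₀)/R}·1_{Q_R}(x,t). -/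
open MeasureTheory Filter

namespace GraphWave

variable {V : Type*}

/-!
In time, `φ_R(x, ·)` is `τ ↦ η (τ / c) ^ s * K` with `c = R ^ ((1 + α) / 2)` and
`K = ψ ((d x x₀ - j) / R)`, so its second derivative is
`s K c⁻² (η'' η ^ (s - 1) + (s - 1) η' ^ 2 η ^ (s - 2))` evaluated at `t / c`.
Off `[c, 2c]` the argument `t / c` lies where `η` is locally constant (up to the boundary, reached
by continuity of `η'` and `η''`), so everything vanishes; on `[c, 2c]` uniform bounds for `η`,
`η'`, `η''` leave the factor `η ^ (s - 2)`, and `c² = R ^ (1 + α)`.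
The factor `K` is controlled because `ψ r · exp (δ r)` is continuous and equals `1` for `r ≥ 2`,
hence is bounded on `[-j / R₀, ∞)`, while `exp (δ j / R) ≤ exp (δ j / R₀)`.
-/

open Set Real

section Cutoff

variable {g : ℝ → ℝ} {s : ℝ}

theorem hasDerivAt_comp_div {f : ℝ → ℝ} (c τ : ℝ) (hf : DifferentiableAt ℝ f (τ / c)) :
    HasDerivAt (fun τ => f (τ / c)) (deriv f (τ / c) / c) τ := by
  have h := hf.hasDerivAt.comp τ ((hasDerivAt_id τ).div_const c)
  rw [mul_one_div] at h
  exact h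

theorem hasDerivAt_rpow_comp_div (hg : Differentiable ℝ g) (hs : 1 ≤ s) (c τ : ℝ) :
    HasDerivAt (fun τ => g (τ / c) ^ s) (s / c * (deriv g (τ / c) * g (τ / c) ^ (s - 1))) τ := by
  convert (hasDerivAt_comp_div c τ (hg _)).rpow_const (Or.inr hs) using 1
  ring

theorem deriv_deriv_rpow_comp_div_mul (hg : ContDiff ℝ 2 g) (hs : 2 ≤ s) (c K t : ℝ) :
    deriv (deriv fun τ => g (τ / c) ^ s * K) t =
      s * K / c ^ 2 * (deriv (deriv g) (t / c) * g (t / c) ^ (s - 1) +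
        (s - 1) * deriv g (t / c) ^ 2 * g (t / c) ^ (s - 2)) := by
  have hg₁ : Differentiable ℝ g := hg.differentiable two_ne_zero
  have hg₂ : Differentiable ℝ (deriv g) := hg.deriv'.differentiable one_ne_zero
  have hfirst : deriv (fun τ => g (τ / c) ^ s * K) =
      fun τ => K * (s / c * (deriv g (τ / c) * g (τ / c) ^ (s - 1))) := by
    funext τ
    rw [((hasDerivAt_rpow_comp_div hg₁ (by linarith) c τ).mul_const K).deriv, mul_comm]
  have hsecond := (((hasDerivAt_comp_div c t (hg₂ _)).mul
    (hasDerivAt_rpow_comp_div hg₁ (s := s - 1) (by linarith) c t)).const_mul (s / c)).const_mul K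
  rw [hfirst]
  refine hsecond.deriv.trans ?_
  rw [show s - 1 - 1 = s - 2 by ring]
  ring

theorem abs_mul_rpow_add_mul_rpow_le {a a₁ a₂ A₁ A₂ B : ℝ} (hs : 2 ≤ s) (ha : 0 ≤ a)
    (haB : a ≤ B) (ha₁ : |a₁| ≤ A₁) (ha₂ : |a₂| ≤ A₂) :
    |a₂ * a ^ (s - 1) + (s - 1) * a₁ ^ 2 * a ^ (s - 2)| ≤
      (A₂ * B + (s - 1) * A₁ ^ 2) * a ^ (s - 2) := by
  have hsplit : a ^ (s - 1) = a ^ (s - 2) * a := by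
    rw [← rpow_add_one' ha (by linarith)]; ring_nf
  have hp : 0 ≤ a ^ (s - 2) := rpow_nonneg ha _
  have hs₁ : 0 ≤ s - 1 := by linarith
  have hterm : 0 ≤ (s - 1) * a₁ ^ 2 * a ^ (s - 2) := mul_nonneg (mul_nonneg hs₁ (sq_nonneg _)) hp
  have ha₁sq : a₁ ^ 2 ≤ A₁ ^ 2 := sq_le_sq' (abs_le.mp ha₁).1 (abs_le.mp ha₁).2
  calc |a₂ * a ^ (s - 1) + (s - 1) * a₁ ^ 2 * a ^ (s - 2)|
      ≤ |a₂ * a ^ (s - 1)| + (s - 1) * a₁ ^ 2 * a ^ (s - 2) :=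
        (abs_add_le _ _).trans_eq (by rw [abs_of_nonneg hterm])
    _ = (|a₂| * a + (s - 1) * a₁ ^ 2) * a ^ (s - 2) := by
        rw [hsplit, abs_mul, abs_of_nonneg (mul_nonneg hp ha)]; ring
    _ ≤ (A₂ * B + (s - 1) * A₁ ^ 2) * a ^ (s - 2) := by
        gcongr
        exact (abs_nonneg _).trans ha₂

theorem abs_deriv_deriv_rpow_comp_div_mul_le {A₁ A₂ B : ℝ} (hg : ContDiff ℝ 2 g)
    (hg₀ : ∀ r, 0 ≤ g r) (hgB : ∀ r, g r ≤ B) (hA₁ : ∀ r, |deriv g r| ≤ A₁)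
    (hA₂ : ∀ r, |deriv (deriv g) r| ≤ A₂) (hs : 2 ≤ s) (c K t : ℝ) :
    |deriv (deriv fun τ => g (τ / c) ^ s * K) t| ≤
      s * |K| * (A₂ * B + (s - 1) * A₁ ^ 2) / c ^ 2 * g (t / c) ^ (s - 2) := by
  rw [deriv_deriv_rpow_comp_div_mul hg hs, abs_mul, abs_div, abs_mul,
    abs_of_nonneg (by linarith : 0 ≤ s), abs_of_nonneg (sq_nonneg c)]
  calc s * |K| / c ^ 2 * |_|
      ≤ s * |K| / c ^ 2 * ((A₂ * B + (s - 1) * A₁ ^ 2) * g (t / c) ^ (s - 2)) := by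
        gcongr
        exact abs_mul_rpow_add_mul_rpow_le hs (hg₀ _) (hgB _) (hA₁ _) (hA₂ _)
    _ = _ := by ring

end Cutoff

theorem eqOn_deriv_zero_closure {f : ℝ → ℝ} {U : Set ℝ} {a : ℝ} (hU : IsOpen U)
    (hf : EqOn f (fun _ => a) U) (hcont : Continuous (deriv f)) :
    EqOn (deriv f) 0 (closure U) := by
  refine EqOn.closure (fun r hr => ?_) hcont continuous_const
  rw [(eventuallyEq_of_mem (hU.mem_nhds hr) hf).deriv_eq]
  simp

theorem deriv_eq_zero_and_deriv_deriv_eq_zero_of_mem_closure {f : ℝ → ℝ} {U : Set ℝ} {a r : ℝ}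
    (hU : IsOpen U) (hf : EqOn f (fun _ => a) U) (hf₂ : ContDiff ℝ 2 f) (hr : r ∈ closure U) :
    deriv f r = 0 ∧ deriv (deriv f) r = 0 := by
  have h₁ := eqOn_deriv_zero_closure hU hf (hf₂.continuous_deriv one_le_two)
  exact ⟨h₁ hr, eqOn_deriv_zero_closure hU (h₁.mono subset_closure)
    (hf₂.deriv'.continuous_deriv le_rfl) hr⟩

theorem deriv_eq_zero_and_deriv_deriv_eq_zero_of_plateaus {η : ℝ → ℝ} (hη : ContDiff ℝ 2 η)
    (hη1 : ∀ r ∈ Icc (0 : ℝ) 1, η r = 1) (hη0 : ∀ r, 2 ≤ r → η r = 0) {r : ℝ}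
    (hr : r ∈ Icc 0 1 ∪ Ici 2) :
    deriv η r = 0 ∧ deriv (deriv η) r = 0 := by
  rcases hr with hr | hr
  · rw [← closure_Ioo zero_ne_one] at hr
    exact deriv_eq_zero_and_deriv_deriv_eq_zero_of_mem_closure isOpen_Ioo
      (fun r hr => hη1 r (Ioo_subset_Icc_self hr)) hη hr
  · rw [← closure_Ioi] at hr
    exact deriv_eq_zero_and_deriv_deriv_eq_zero_of_mem_closure isOpen_Ioi
      (fun r hr => hη0 r hr.le) hη hr

theorem exists_abs_le_mul_exp_of_eq_exp {ψ : ℝ → ℝ} {a b δ : ℝ} (hψ : Continuous ψ)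
    (hexp : ∀ r, b ≤ r → ψ r = exp (-δ * r)) :
    ∃ C, 0 ≤ C ∧ ∀ r, a ≤ r → |ψ r| ≤ C * exp (-δ * r) := by
  obtain ⟨M, hM⟩ := (isCompact_Icc : IsCompact (Icc a b)).exists_bound_of_continuousOn
    (hψ.mul (continuous_const.mul continuous_id).rexp).continuousOn
  refine ⟨max M 1, zero_le_one.trans (le_max_right _ _), fun r hr => ?_⟩
  have hbound : |ψ r * exp (δ * r)| ≤ max M 1 := by
    rcases le_or_gt r b with hrb | hrb
    · exact (hM r ⟨hr, hrb⟩).trans (le_max_left _ _)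
    · rw [hexp r hrb.le, ← exp_add, show -δ * r + δ * r = 0 by ring, exp_zero, abs_one]
      exact le_max_right _ _
  calc |ψ r| = |ψ r * exp (δ * r)| * exp (-δ * r) := by
        rw [abs_mul, abs_of_pos (exp_pos _), mul_assoc, ← exp_add, show δ * r + -δ * r = 0 by ring,
          exp_zero, mul_one]
    _ ≤ max M 1 * exp (-δ * r) := by gcongr

theorem exists_abs_comp_sub_div_le_mul_exp {ψ : ℝ → ℝ} {b δ j R₀ : ℝ} (hψ : Continuous ψ)
    (hexp : ∀ r, b ≤ r → ψ r = exp (-δ * r)) (hδ : 0 ≤ δ) (hj : 0 ≤ j) (hR₀ : 0 < R₀) :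
    ∃ K, 0 ≤ K ∧ ∀ R, R₀ ≤ R → ∀ D, 0 ≤ D → |ψ ((D - j) / R)| ≤ K * exp (-δ * D / R) := by
  obtain ⟨C, hC, hψC⟩ := exists_abs_le_mul_exp_of_eq_exp (a := -(j / R₀)) hψ hexp
  refine ⟨C * exp (δ * (j / R₀)), by positivity, fun R hR D hD => ?_⟩
  have hR0 : 0 < R := hR₀.trans_le hR
  have hjR : j / R ≤ j / R₀ := div_le_div_of_nonneg_left hj hR₀ hR
  have hDR : 0 ≤ D / R := div_nonneg hD hR0.le
  calc |ψ ((D - j) / R)| ≤ C * exp (-δ * ((D - j) / R)) :=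
        hψC _ (by rw [sub_div]; linarith)
    _ = C * exp (δ * (j / R)) * exp (-δ * D / R) := by
        rw [mul_assoc, ← exp_add]; congr 2; ring
    _ ≤ C * exp (δ * (j / R₀)) * exp (-δ * D / R) := by gcongr

theorem dtt_expcutoff_bound_general {V : Type*}
    (G : WeightedGraph V) (d : V → V → ℝ) (x₀ : V) (R₀ α : ℝ)
    (hA : AssumptionA G d x₀ R₀ α)
    (j : ℝ) (hj0 : 0 ≤ j)
    (δ s : ℝ) (hδ : 0 < δ) (hs : 2 ≤ s)
    (ψ : ℝ → ℝ) (hψsm : ContDiff ℝ 2 ψ)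
    (hψexp : ∀ r, 2 ≤ r → ψ r = Real.exp (-δ * r))
    (η : ℝ → ℝ) (hηsm : ContDiff ℝ 2 η) (hηnn : ∀ r, 0 ≤ η r)
    (hηspt : HasCompactSupport η)
    (hη1 : ∀ r ∈ Set.Icc (0 : ℝ) 1, η r = 1)
    (hη0 : ∀ r, 2 ≤ r → η r = 0) :
    ∃ C > 0, ∀ R ≥ R₀, ∀ (x : V) (t : ℝ), 0 ≤ t →
      |deriv (deriv (fun τ => η (τ / R ^ ((1 + α) / 2)) ^ s * ψ ((d x x₀ - j) / R))) t| ≤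
        C / R ^ (1 + α) * η (t / R ^ ((1 + α) / 2)) ^ (s - 2) *
          Real.exp (-δ * d x x₀ / R) *
          Set.indicator (Set.Icc (R ^ ((1 + α) / 2)) (2 * R ^ ((1 + α) / 2)))
            (fun _ => (1 : ℝ)) t := by
  obtain ⟨B, hB⟩ := hηspt.exists_bound_of_continuous hηsm.continuous
  obtain ⟨A₁, hA₁⟩ := hηspt.deriv.exists_bound_of_continuous (hηsm.continuous_deriv one_le_two)
  obtain ⟨A₂, hA₂⟩ := hηspt.deriv.deriv.exists_bound_of_continuous
    (hηsm.deriv'.continuous_deriv le_rfl)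
  obtain ⟨K, hK, hψK⟩ :=
    exists_abs_comp_sub_div_le_mul_exp hψsm.continuous hψexp hδ.le hj0 hA.R₀_pos
  set X := A₂ * B + (s - 1) * A₁ ^ 2
  have hX : 0 ≤ X := add_nonneg (mul_nonneg ((norm_nonneg _).trans (hA₂ 0))
    ((norm_nonneg _).trans (hB 0))) (mul_nonneg (by linarith) (sq_nonneg _))
  refine ⟨s * K * X + 1, by positivity, fun R hR x t ht => ?_⟩
  have hR0 : 0 < R := hA.R₀_pos.trans_le hR
  set c := R ^ ((1 + α) / 2) with hc
  have hc0 : 0 < c := rpow_pos_of_pos hR0 _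
  have hc2 : c ^ 2 = R ^ (1 + α) := by
    rw [hc, ← rpow_natCast, ← rpow_mul hR0.le]; norm_num
  by_cases htc : t ∈ Icc c (2 * c)
  · have hp : 0 ≤ η (t / c) ^ (s - 2) := rpow_nonneg (hηnn _) _
    rw [indicator_of_mem htc, mul_one, ← hc2]
    calc _ ≤ s * |ψ ((d x x₀ - j) / R)| * X / c ^ 2 * η (t / c) ^ (s - 2) :=
          abs_deriv_deriv_rpow_comp_div_mul_le hηsm hηnn (fun r => (le_abs_self _).trans (hB r))
            hA₁ hA₂ hs c _ t
      _ ≤ s * (K * exp (-δ * d x x₀ / R)) * X / c ^ 2 * η (t / c) ^ (s - 2) := by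
          gcongr
          exact hψK R hR _ (hA.pm.nonneg x x₀)
      _ = s * K * X / c ^ 2 * η (t / c) ^ (s - 2) * exp (-δ * d x x₀ / R) := by ring
      _ ≤ _ := by gcongr; linarith
  · have hflat : t / c ∈ Icc 0 1 ∪ Ici 2 := by
      rcases not_and_or.mp htc with h | h
      · exact Or.inl ⟨div_nonneg ht hc0.le, (div_le_one hc0).2 (not_le.1 h).le⟩
      · exact Or.inr ((le_div_iff₀ hc0).2 (not_le.1 h).le)
    obtain ⟨h₁, h₂⟩ := deriv_eq_zero_and_deriv_deriv_eq_zero_of_plateaus hηsm hη1 hη0 hflat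
    rw [indicator_of_notMem htc, mul_zero, deriv_deriv_rpow_comp_div_mul hηsm hs, h₁, h₂]
    simp

/-- Lemma (exponential cut-off): bound on `|∂²_t φ_R|`. -/
theorem dtt_expcutoff_bound {V : Type*} [Countable V] [Infinite V]
    (G : WeightedGraph V) (d : V → V → ℝ) (x₀ : V) (R₀ α : ℝ)
    (hLF : G.LocallyFinite) (hConn : G.Connected)
    (hA : AssumptionA G d x₀ R₀ α)
    (j : ℝ) (hj : IsLUB (jumpSet G d) j) (hj0 : 0 ≤ j)
    (δ s : ℝ) (hδ : 0 < δ) (hs : 2 ≤ s)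
    (ψ : ℝ → ℝ) (hψsm : ContDiff ℝ 2 ψ) (hψpos : ∀ r, 0 < ψ r)
    (hψ' : ∀ r, -j ≤ r → deriv ψ r ≤ 0)
    (hψ1 : ∀ r ∈ Set.Icc (-j) (1 : ℝ), ψ r = 1)
    (hψexp : ∀ r, 2 ≤ r → ψ r = Real.exp (-δ * r))
    (η : ℝ → ℝ) (hηsm : ContDiff ℝ 2 η) (hηnn : ∀ r, 0 ≤ η r)
    (hηspt : HasCompactSupport η)
    (hη' : ∀ r, 0 ≤ r → deriv η r ≤ 0)
    (hη1 : ∀ r ∈ Set.Icc (0 : ℝ) 1, η r = 1)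
    (hη0 : ∀ r, 2 ≤ r → η r = 0) :
    ∃ C > 0, ∀ R ≥ R₀, ∀ (x : V) (t : ℝ), 0 ≤ t →
      |deriv (deriv (fun τ => η (τ / R ^ ((1 + α) / 2)) ^ s * ψ ((d x x₀ - j) / R))) t| ≤
        C / R ^ (1 + α) * η (t / R ^ ((1 + α) / 2)) ^ (s - 2) *
          Real.exp (-δ * d x x₀ / R) *
          Set.indicator (Set.Icc (R ^ ((1 + α) / 2)) (2 * R ^ ((1 + α) / 2)))
            (fun _ => (1 : ℝ)) t :=
  dtt_expcutoff_bound_general G d x₀ R₀ α hA j hj0 δ s hδ hs ψ hψsm hψexp η hηsm hηnn hηspt hη1 hη0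

end GraphWave
end
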